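/- Let λ = (λ₁ ≥ … ≥ λ_N ≥ 0) be a partition with at most N parts and exactly p ≥ 1 nonzero parts (so λ_p > 0 and λ_{p+1} = 0 if p < N), and let γ be the partition obtained from λ by replacing λ_p with λ_p − 1. Then the identity (q t^N; q, t)_λ · h_{q,t}(γ, qt) · (1 − t q^{λ_p}) · Π_{i=1}^{p−1} (1 − q^{λ_i − λ_p + 1} t^{p−i+1}) = (q t^N; q, t)_γ · h_{q,t}(λ, qt) · (1 − t^{N−p+1} q^{λ_p}) · Π_{i=1}^{p−1} (1 − q^{λ_i − λ_p + 1} t^{p−i}) holds in ℤ[q,t]. -/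

import Mathlib

open Finset MvPolynomial

/-- `ℤ[q,t]`, with `q = X 0` and `t = X 1`. -/
abbrev Zqt : Type := MvPolynomial (Fin 2) ℤ

noncomputable def qz : Zqt := X 0
noncomputable def tz : Zqt := X 1

/-- The conjugate partition: `λ'_j = #{i : λ_i ≥ j}`. -/
def conjPart {N : ℕ} (lam : Fin N → ℕ) (j : ℕ) : ℕ :=
  (univ.filter fun i : Fin N => j ≤ lam i).card

/-- The `(q,t)`-hook product of a partition `λ` with argument `z`, using the classical
arm `λ_i − j` and leg `λ'_j − i` of the cell `(i,j)`:
`h_{q,t}(λ,z) = Π_{(i,j)∈λ} (1 − z q^{λ_i−j} t^{λ'_j−i})`. -/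
noncomputable def hookP {N : ℕ} (lam : Fin N → ℕ) (z : Zqt) : Zqt :=
  ∏ i : Fin N, ∏ j ∈ Icc 1 (lam i),
    (1 - z * qz ^ (lam i - j) * tz ^ (conjPart lam j - ((i : ℕ) + 1)))

/-- `(q t^N; q, t)_λ = Π_{i=1}^{N} Π_{l=0}^{λ_i−1} (1 − q^{1+l} t^{N+1−i})`. -/
noncomputable def gpochQTN {N : ℕ} (lam : Fin N → ℕ) : Zqt :=
  ∏ i : Fin N, ∏ l ∈ range (lam i), (1 - qz ^ (1 + l) * tz ^ (N - (i : ℕ)))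


/-!
Let `i₀` be the last nonzero row of `λ` (counted from `0`) and `m = λ_{i₀}`. Removing the box
`(i₀, m)` divides `(qt^N; q, t)_λ` by the single factor `1 - q^m t^{N-i₀}`. In the hook product
only row `i₀` and column `m` change: every cell of row `i₀` has leg `0`, so that row is
`∏_{a<m} (1 - z q^a)` and merely loses the factor `1 - z q^{m-1}`; in column `m` each row
`i < i₀` sees its leg drop by one, and these column factors are exactly the two products over
`i < i₀` in the statement.
-/

theorem Finset.prod_univ_eq_prod_Iio_mul {α M : Type*} [Fintype α] [LinearOrder α]
    [LocallyFiniteOrderBot α] [CommMonoid M] (f : α → M) (a : α) (h : ∀ i, a < i → f i = 1) :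
    ∏ i, f i = (∏ i ∈ Iio a, f i) * f a := by
  rw [prod_Iio_mul_eq_prod_Iic]
  exact (prod_subset (subset_univ _) fun i _ hi => h i (by simpa using hi)).symm

theorem Fin.prod_Iio_eq_prod_castLE {M : Type*} [CommMonoid M] {N k : ℕ} (hk : k < N)
    (f : Fin N → M) : ∏ i ∈ Iio (⟨k, hk⟩ : Fin N), f i = ∏ i : Fin k, f (Fin.castLE hk.le i) := by
  refine Eq.trans ?_ (prod_map univ (Fin.castLEEmb hk.le) f)
  congr 1
  ext i
  simp only [mem_Iio, mem_map, mem_univ, true_and, Fin.castLEEmb_apply, Fin.lt_def]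
  exact ⟨fun hi => ⟨⟨i, hi⟩, rfl⟩, by rintro ⟨j, rfl⟩; exact j.isLt⟩

noncomputable def hookRow {N : ℕ} (lam : Fin N → ℕ) (z : Zqt) (i : Fin N) : Zqt :=
  ∏ j ∈ Icc 1 (lam i), (1 - z * qz ^ (lam i - j) * tz ^ (conjPart lam j - ((i : ℕ) + 1)))

theorem hookP_eq_prod_hookRow {N : ℕ} (lam : Fin N → ℕ) (z : Zqt) :
    hookP lam z = ∏ i, hookRow lam z i := rfl

theorem hookRow_eq_one {N : ℕ} (lam : Fin N → ℕ) {z : Zqt} {i : Fin N} (h : lam i = 0) :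
    hookRow lam z i = 1 := by
  simp [hookRow, h]

theorem hookRow_eq_prod_range {N : ℕ} (lam : Fin N → ℕ) (z : Zqt) {i : Fin N}
    (hleg : ∀ j ∈ Icc 1 (lam i), conjPart lam j ≤ i + 1) :
    hookRow lam z i = ∏ a ∈ range (lam i), (1 - z * qz ^ a) := by
  rw [hookRow, ← prod_range_reflect, ← Ico_add_one_right_eq_Icc, prod_Ico_eq_prod_range,
    add_tsub_cancel_right]
  refine prod_congr rfl fun a ha => ?_
  have := hleg (1 + a) (mem_Icc.2 ⟨by omega, by have := mem_range.1 ha; omega⟩)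
  rw [tsub_eq_zero_of_le this, pow_zero, mul_one, Nat.sub_sub, add_comm 1 a]

def removeBox {N : ℕ} (lam : Fin N → ℕ) (i₀ : Fin N) : Fin N → ℕ :=
  Function.update lam i₀ (lam i₀ - 1)

section RemoveBox

variable {N : ℕ} (lam : Fin N → ℕ) (i₀ : Fin N)

theorem removeBox_self : removeBox lam i₀ i₀ = lam i₀ - 1 :=
  Function.update_self ..

theorem removeBox_of_ne {i : Fin N} (hi : i ≠ i₀) : removeBox lam i₀ i = lam i :=
  Function.update_of_ne hi ..

theorem conjPart_removeBox_of_ne {j : ℕ} (hj : j ≠ lam i₀) :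
    conjPart (removeBox lam i₀) j = conjPart lam j := by
  unfold conjPart
  congr 1
  refine filter_congr fun i _ => ?_
  rcases eq_or_ne i i₀ with rfl | hi
  · rw [removeBox_self]; omega
  · rw [removeBox_of_ne lam i₀ hi]

theorem conjPart_removeBox_self_add_one (hpos : 0 < lam i₀) :
    conjPart (removeBox lam i₀) (lam i₀) + 1 = conjPart lam (lam i₀) := by
  unfold conjPart
  rw [← card_insert_of_notMem (s := filter _ _) (a := i₀) (by simp [removeBox_self]; omega)]
  congr 1
  ext i
  rcases eq_or_ne i i₀ with rfl | hi <;> simp [removeBox_of_ne, *]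

theorem conjPart_le_of_eq_zero (hzero : ∀ i, i₀ < i → lam i = 0) {j : ℕ} (hj : 1 ≤ j) :
    conjPart lam j ≤ i₀ + 1 :=
  calc conjPart lam j ≤ #(Iic i₀) := card_le_card fun i hi => by
        by_contra h
        simp_all
    _ = i₀ + 1 := Fin.card_Iic i₀

theorem conjPart_apply_self_of_antitone (hanti : Antitone lam) (hzero : ∀ i, i₀ < i → lam i = 0)
    (hpos : 0 < lam i₀) : conjPart lam (lam i₀) = i₀ + 1 := by
  rw [← Fin.card_Iic i₀, conjPart]
  congr 1
  ext i
  simp only [mem_filter, mem_univ, true_and, mem_Iic]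
  refine ⟨fun h => ?_, fun h => hanti h⟩
  by_contra hi
  have := hzero i (lt_of_not_ge hi)
  omega

theorem gpochQTN_eq_gpochQTN_removeBox_mul (hpos : 0 < lam i₀) :
    gpochQTN lam = gpochQTN (removeBox lam i₀) * (1 - qz ^ lam i₀ * tz ^ (N - i₀)) := by
  obtain ⟨m, hm⟩ : ∃ m, lam i₀ = m + 1 := ⟨lam i₀ - 1, by omega⟩
  let G : Fin N → ℕ → Zqt := fun i n => ∏ l ∈ range n, (1 - qz ^ (1 + l) * tz ^ (N - (i : ℕ)))
  have hrest : ∏ i ∈ univ.erase i₀, G i (removeBox lam i₀ i) = ∏ i ∈ univ.erase i₀, G i (lam i) :=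
    prod_congr rfl fun i hi => by rw [removeBox_of_ne lam i₀ (ne_of_mem_erase hi)]
  change ∏ i, G i (lam i) = (∏ i, G i (removeBox lam i₀ i)) * _
  rw [← mul_prod_erase univ _ (mem_univ i₀), ← mul_prod_erase univ _ (mem_univ i₀), hrest,
    removeBox_self, hm, add_tsub_cancel_right]
  simp only [G, prod_range_succ]
  ring

theorem hookRow_eq_hookRow_removeBox_mul (hzero : ∀ i, i₀ < i → lam i = 0) (hpos : 0 < lam i₀)
    (z : Zqt) :
    hookRow lam z i₀ = hookRow (removeBox lam i₀) z i₀ * (1 - z * qz ^ (lam i₀ - 1)) := by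
  have hzero' : ∀ i, i₀ < i → removeBox lam i₀ i = 0 := fun i hi => by
    rw [removeBox_of_ne lam i₀ hi.ne', hzero i hi]
  rw [hookRow_eq_prod_range lam z fun j hj => conjPart_le_of_eq_zero lam i₀ hzero (mem_Icc.1 hj).1,
    hookRow_eq_prod_range _ z fun j hj => conjPart_le_of_eq_zero _ i₀ hzero' (mem_Icc.1 hj).1,
    removeBox_self, ← prod_range_succ, Nat.sub_add_cancel hpos]

theorem hookRow_mul_eq_hookRow_removeBox_mul {i : Fin N} (hi : i ≠ i₀) (hpos : 0 < lam i₀)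
    (hle : lam i₀ ≤ lam i) (z : Zqt) :
    hookRow lam z i * (1 - z * qz ^ (lam i - lam i₀) *
        tz ^ (conjPart (removeBox lam i₀) (lam i₀) - (i + 1))) =
      hookRow (removeBox lam i₀) z i *
        (1 - z * qz ^ (lam i - lam i₀) * tz ^ (conjPart lam (lam i₀) - (i + 1))) := by
  have hmem : lam i₀ ∈ Icc 1 (lam i) := mem_Icc.2 ⟨hpos, hle⟩
  have hrest : ∏ j ∈ (Icc 1 (lam i)).erase (lam i₀),
        (1 - z * qz ^ (lam i - j) * tz ^ (conjPart (removeBox lam i₀) j - (i + 1))) =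
      ∏ j ∈ (Icc 1 (lam i)).erase (lam i₀),
        (1 - z * qz ^ (lam i - j) * tz ^ (conjPart lam j - (i + 1))) :=
    prod_congr rfl fun j hj => by rw [conjPart_removeBox_of_ne lam i₀ (ne_of_mem_erase hj)]
  unfold hookRow
  rw [removeBox_of_ne lam i₀ hi, ← mul_prod_erase _ _ hmem, ← mul_prod_erase _ _ hmem, hrest]
  ring

variable {lam i₀}

theorem hookRow_qt_mul_eq_hookRow_removeBox_mul (hanti : Antitone lam)
    (hzero : ∀ i, i₀ < i → lam i = 0) (hpos : 0 < lam i₀) {i : Fin N} (hi : i < i₀) :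
    hookRow lam (qz * tz) i * (1 - qz ^ (lam i - lam i₀ + 1) * tz ^ (i₀ - i : ℕ)) =
      hookRow (removeBox lam i₀) (qz * tz) i *
        (1 - qz ^ (lam i - lam i₀ + 1) * tz ^ (i₀ + 1 - i : ℕ)) := by
  have hi' : (i : ℕ) < i₀ := hi
  have hcl := conjPart_apply_self_of_antitone lam i₀ hanti hzero hpos
  have hcg := conjPart_removeBox_self_add_one lam i₀ hpos
  have := hookRow_mul_eq_hookRow_removeBox_mul lam i₀ hi.ne hpos (hanti hi.le) (qz * tz)
  rw [show conjPart (removeBox lam i₀) (lam i₀) = i₀ by omega, hcl] at this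
  rw [show (i₀ - i : ℕ) = i₀ - (i + 1) + 1 by omega,
    show (i₀ + 1 - i : ℕ) = i₀ + 1 - (i + 1) + 1 by omega]
  convert this using 2 <;> ring

theorem gpochQTN_mul_hookP_removeBox (hanti : Antitone lam) (hzero : ∀ i, i₀ < i → lam i = 0)
    (hpos : 0 < lam i₀) :
    gpochQTN lam * hookP (removeBox lam i₀) (qz * tz) * (1 - tz * qz ^ lam i₀) *
        ∏ i ∈ Iio i₀, (1 - qz ^ (lam i - lam i₀ + 1) * tz ^ (i₀ + 1 - i : ℕ)) =
      gpochQTN (removeBox lam i₀) * hookP lam (qz * tz) * (1 - tz ^ (N - i₀) * qz ^ lam i₀) *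
        ∏ i ∈ Iio i₀, (1 - qz ^ (lam i - lam i₀ + 1) * tz ^ (i₀ - i : ℕ)) := by
  have hrows := prod_congr rfl fun i hi =>
    hookRow_qt_mul_eq_hookRow_removeBox_mul hanti hzero hpos (mem_Iio.1 hi)
  rw [prod_mul_distrib, prod_mul_distrib] at hrows
  rw [hookP_eq_prod_hookRow, hookP_eq_prod_hookRow,
    prod_univ_eq_prod_Iio_mul _ i₀ fun i hi => hookRow_eq_one _ (hzero i hi),
    prod_univ_eq_prod_Iio_mul _ i₀ fun i hi => hookRow_eq_one _ (by
      rw [removeBox_of_ne lam i₀ hi.ne', hzero i hi]),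
    gpochQTN_eq_gpochQTN_removeBox_mul lam i₀ hpos,
    hookRow_eq_hookRow_removeBox_mul lam i₀ hzero hpos,
    show qz * tz * qz ^ (lam i₀ - 1) = tz * qz ^ lam i₀ by
      conv_rhs => rw [← Nat.sub_add_cancel hpos]
      ring]
  linear_combination -(gpochQTN (removeBox lam i₀) * hookRow (removeBox lam i₀) (qz * tz) i₀ *
    (1 - qz ^ lam i₀ * tz ^ (N - i₀)) * (1 - tz * qz ^ lam i₀)) * hrows

end RemoveBox

/-- Let `λ` be a partition with at most `N` parts and exactly `p ≥ 1` nonzero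
parts, and let `γ` be obtained from `λ` by replacing `λ_p` with `λ_p − 1`.  Then
`(qt^N;q,t)_λ · h_{q,t}(γ,qt) · (1 − t q^{λ_p}) · Π_{i=1}^{p−1}(1 − q^{λ_i−λ_p+1} t^{p−i+1})
 = (qt^N;q,t)_γ · h_{q,t}(λ,qt) · (1 − t^{N−p+1} q^{λ_p}) · Π_{i=1}^{p−1}(1 − q^{λ_i−λ_p+1} t^{p−i})`
holds in `ℤ[q,t]`. -/
theorem hook_pochhammer_corner_removal
    (N p : ℕ) (hp : 1 ≤ p) (hpN : p ≤ N)
    (lam : Fin N → ℕ) (hanti : Antitone lam)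
    (hpos : 0 < lam ⟨p - 1, by omega⟩) (hzero : ∀ j : Fin N, p ≤ (j : ℕ) → lam j = 0)
    (gam : Fin N → ℕ)
    (hgam : gam = fun j : Fin N => if (j : ℕ) = p - 1 then lam j - 1 else lam j) :
    gpochQTN lam * hookP gam (qz * tz) * (1 - tz * qz ^ (lam ⟨p - 1, by omega⟩)) *
        ∏ i : Fin (p - 1),
          (1 - qz ^ (lam (Fin.castLE (by omega) i) - lam ⟨p - 1, by omega⟩ + 1) *
            tz ^ (p - (i : ℕ))) =
      gpochQTN gam * hookP lam (qz * tz) *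
          (1 - tz ^ (N - p + 1) * qz ^ (lam ⟨p - 1, by omega⟩)) *
        ∏ i : Fin (p - 1),
          (1 - qz ^ (lam (Fin.castLE (by omega) i) - lam ⟨p - 1, by omega⟩ + 1) *
            tz ^ (p - 1 - (i : ℕ))) := by
  set i₀ : Fin N := ⟨p - 1, by omega⟩
  have hi₀ : (i₀ : ℕ) = p - 1 := rfl
  have hzero' : ∀ i, i₀ < i → lam i = 0 := fun i hi =>
    hzero i (by rw [Fin.lt_def, hi₀] at hi; omega)
  have hgam' : gam = removeBox lam i₀ := by
    subst hgam
    funext i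
    rcases eq_or_ne i i₀ with rfl | hi
    · simp [i₀, removeBox_self]
    · rw [removeBox_of_ne lam i₀ hi, if_neg fun h => hi (Fin.ext h)]
  have hcast : ∀ e : ℕ → ℕ, ∏ i : Fin (p - 1),
      (1 - qz ^ (lam (Fin.castLE (by omega) i) - lam i₀ + 1) * tz ^ e i) =
        ∏ i ∈ Iio i₀, (1 - qz ^ (lam i - lam i₀ + 1) * tz ^ e i) := fun e =>
    (Fin.prod_Iio_eq_prod_castLE _ fun i => 1 - qz ^ (lam i - lam i₀ + 1) * tz ^ e i).symm
  have key := gpochQTN_mul_hookP_removeBox hanti hzero' hpos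
  rw [hi₀, Nat.sub_add_cancel hp, show N - (p - 1) = N - p + 1 by omega] at key
  rw [hgam', hcast fun i => p - i, hcast fun i => p - 1 - i]
  exact key
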